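/- Let C be a pointed, spanning polyhedral cone in E = ℝⁿ and let D ⊆ E be a downset. For every b ∈ D there exist faces τ ⊆ σ of C and a point a ∈ E with b ≼ a such that a is a cogenerator of D along τ with nadir σ, i.e., (a + C) ∩ D^σ = a + τ where D^σ := {x ∈ E | x − σ° ⊆ D}, and no face σ'' of C with τ ⊆ σ'' ⊊ σ satisfies a − σ''° ⊆ D. -/

import Mathlib

open Pointwise

/-- A polyhedral cone in `ℝⁿ`: an intersection of finitely many closed linear half-spaces. -/
def IsPolyCone {n : ℕ} (C : Set (Fin n → ℝ)) : Prop :=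
  ∃ (m : ℕ) (ℓ : Fin m → ((Fin n → ℝ) →ₗ[ℝ] ℝ)), C = {x | ∀ i, 0 ≤ ℓ i x}

/-- A face of a cone `C`: a subset of `C` containing `0`, closed under addition, and such
that whenever `x, y ∈ C` and `x + y` lies in the subset, both `x` and `y` do. -/
def IsConeFace {M : Type*} [AddCommMonoid M] (σ C : Set M) : Prop :=
  σ ⊆ C ∧ (0 : M) ∈ σ ∧ (∀ x ∈ σ, ∀ y ∈ σ, x + y ∈ σ) ∧
    ∀ x ∈ C, ∀ y ∈ C, x + y ∈ σ → x ∈ σ ∧ y ∈ σ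

/-- A downset for the partial order `x ≼ y ↔ y - x ∈ C`. -/
def IsDownset {n : ℕ} (C D : Set (Fin n → ℝ)) : Prop :=
  ∀ x y : Fin n → ℝ, y ∈ D → y - x ∈ C → x ∈ D

/-- The upper boundary downset `D^σ = {a | a - σ° ⊆ D}`. -/
def upSet {n : ℕ} (D σ : Set (Fin n → ℝ)) : Set (Fin n → ℝ) :=
  {a | ∀ s ∈ intrinsicInterior ℝ σ, a - s ∈ D}

/-- `a` is a cogenerator of the downset `D` along the face `τ` with nadir `σ`:
`(a + C) ∩ D^σ = a + τ` and no face `σ''` with `τ ⊆ σ'' ⊊ σ` satisfies `a - σ''° ⊆ D`. -/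
def IsCogen {n : ℕ} (C D τ σ : Set (Fin n → ℝ)) (a : Fin n → ℝ) : Prop :=
  (({a} + C) ∩ upSet D σ = {a} + τ) ∧
  ∀ σ'' : Set (Fin n → ℝ), IsConeFace σ'' C → τ ⊆ σ'' → σ'' ⊂ σ →
    ¬ (∀ s ∈ intrinsicInterior ℝ σ'', a - s ∈ D)

/-- A `σ`-vicinity of a point `p` of `E ⧸ span τ`: the image under the quotient map of
`u + σ° + C` for some `u` admitting a representative `w` of `p` with `w - u ∈ σ°`. -/
def IsVic {n : ℕ} (C σ τ : Set (Fin n → ℝ))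
    (p : (Fin n → ℝ) ⧸ Submodule.span ℝ τ)
    (V : Set ((Fin n → ℝ) ⧸ Submodule.span ℝ τ)) : Prop :=
  ∃ u w : Fin n → ℝ, (Submodule.span ℝ τ).mkQ w = p ∧
    w - u ∈ intrinsicInterior ℝ σ ∧
    V = (Submodule.span ℝ τ).mkQ '' ({u} + intrinsicInterior ℝ σ + C)

/-!
Write `C = {x | ∀ i, 0 ≤ ℓ i x}` and `U = D^C`, which is closed because `C°` is open. The faces of
`C` are cut out by sets of equations `ℓ i = 0`, so there are finitely many, and the relative
interior of a face is where the remaining inequalities are strict.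

Among the points above `b` in `U`, take one, `a`, whose set of faces along which it can be raised
inside `U` is minimal, and a maximal such face, with a direction `c` in its relative interior. If
the ray `a + ℝ≥0 c` left `U`, passing to its last point in `U` would shrink that set; so the ray
stays in `U`, and then `(a + c + C) ∩ U = a + c + τ` for the face `τ` of `c`. Moving up along `τ`
then removes, one at a time, the faces `σ` for which `D^σ` can still be left along `τ`. The nadir
is finally a minimal face `σ ⊇ τ` with `a ∈ D^σ`.
-/

open Set Filter

theorem exists_nat_forall_le_mul {ι : Type*} [Finite ι] {p : ι → Prop} {f : ι → ℝ}
    (hf : ∀ i, p i → 0 < f i) (g : ι → ℝ) : ∃ N : ℕ, ∀ i, p i → g i ≤ N * f i := by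
  have h : ∀ i, ∀ᶠ N : ℕ in atTop, p i → g i ≤ N * f i := fun i => by
    by_cases hi : p i
    · exact ((tendsto_natCast_atTop_atTop.atTop_mul_const (hf i hi)).eventually_ge_atTop
        (g i)).mono fun _ h _ => h
    · exact .of_forall fun _ h => absurd h hi
  exact (eventually_all.2 h).exists

namespace PolyhedralCone

section Faces

variable {E ι : Type*} [AddCommGroup E] [Module ℝ E] (ℓ : ι → E →ₗ[ℝ] ℝ)

def face (S : Set ι) : Set E :=
  {x | (∀ i, 0 ≤ ℓ i x) ∧ ∀ i ∈ S, ℓ i x = 0}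

def vanishing (σ : Set E) : Set ι :=
  {i | ∀ x ∈ σ, ℓ i x = 0}

/-- The relative interior `(face ℓ S)°`, see `intrinsicInterior_face`. -/
def openFace (S : Set ι) : Set E :=
  {x | (∀ i ∈ vanishing ℓ (face ℓ S), ℓ i x = 0) ∧ ∀ i ∉ vanishing ℓ (face ℓ S), 0 < ℓ i x}

variable {ℓ} {S T : Set ι} {x y : E}

theorem face_empty : face ℓ ∅ = {x | ∀ i, 0 ≤ ℓ i x} := by
  simp [face]

theorem face_anti (h : S ⊆ T) : face ℓ T ⊆ face ℓ S :=
  fun _ hx => ⟨hx.1, fun i hi => hx.2 i (h hi)⟩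

theorem face_subset_cone : face ℓ S ⊆ face ℓ ∅ :=
  face_anti (empty_subset S)

theorem zero_mem_face : (0 : E) ∈ face ℓ S := by
  simp [face]

theorem add_mem_face (hx : x ∈ face ℓ S) (hy : y ∈ face ℓ S) : x + y ∈ face ℓ S :=
  ⟨fun i => by simpa using add_nonneg (hx.1 i) (hy.1 i),
    fun i hi => by simp [hx.2 i hi, hy.2 i hi]⟩

theorem smul_mem_face {t : ℝ} (ht : 0 ≤ t) (hx : x ∈ face ℓ S) : t • x ∈ face ℓ S :=
  ⟨fun i => by simpa using mul_nonneg ht (hx.1 i), fun i hi => by simp [hx.2 i hi]⟩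

theorem isConeFace_face (S : Set ι) : IsConeFace (face ℓ S) (face ℓ ∅) := by
  refine ⟨face_subset_cone, zero_mem_face, fun x hx y hy => add_mem_face hx hy,
    fun x hx y hy hxy => ?_⟩
  have h : ∀ i ∈ S, ℓ i x = 0 ∧ ℓ i y = 0 := fun i hi => by
    have := hxy.2 i hi
    rw [map_add] at this
    constructor <;> linarith [hx.1 i, hy.1 i]
  exact ⟨⟨hx.1, fun i hi => (h i hi).1⟩, ⟨hy.1, fun i hi => (h i hi).2⟩⟩

theorem subset_vanishing_face : S ⊆ vanishing ℓ (face ℓ S) :=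
  fun i hi _ hx => hx.2 i hi

theorem openFace_subset_face : openFace ℓ S ⊆ face ℓ S := fun x hx =>
  ⟨fun i => by
    by_cases hi : i ∈ vanishing ℓ (face ℓ S)
    exacts [(hx.1 i hi).ge, (hx.2 i hi).le],
  fun i hi => hx.1 i (subset_vanishing_face hi)⟩

theorem smul_mem_openFace {t : ℝ} (ht : 0 < t) (hx : x ∈ openFace ℓ S) :
    t • x ∈ openFace ℓ S :=
  ⟨fun i hi => by simp [hx.1 i hi], fun i hi => by simpa using mul_pos ht (hx.2 i hi)⟩

theorem mem_openFace_setOf_eq_zero (hx : x ∈ face ℓ ∅) : x ∈ openFace ℓ {i | ℓ i x = 0} :=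
  ⟨fun _ hi => hi x ⟨hx.1, fun _ h => h⟩,
    fun i hi => (hx.1 i).lt_of_ne' fun h => hi (subset_vanishing_face h)⟩

theorem face_subset_of_mem_openFace (hx : x ∈ openFace ℓ S) (hxT : x ∈ face ℓ T) :
    face ℓ S ⊆ face ℓ T := fun y hy =>
  ⟨hy.1, fun i hi => by
    by_contra h
    exact (hx.2 i fun hv => h (hv y hy)).ne' (hxT.2 i hi)⟩

theorem map_eq_zero_of_mem_affineSpan {i : ι} (hi : i ∈ vanishing ℓ (face ℓ S))
    (hx : x ∈ affineSpan ℝ (face ℓ S)) : ℓ i x = 0 :=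
  (affineSpan_le.mpr (fun y hy => hi y hy) :
    affineSpan ℝ (face ℓ S) ≤ (LinearMap.ker (ℓ i)).toAffineSubspace) hx

variable [Finite ι]

theorem exists_mem_forall_pos {σ : Set E} (hσ : IsConeFace σ (face ℓ ∅)) :
    ∃ z ∈ σ, ∀ i ∉ vanishing ℓ σ, 0 < ℓ i z := by
  have : ∀ i, ∃ x ∈ σ, i ∉ vanishing ℓ σ → 0 < ℓ i x := fun i => by
    by_cases hi : i ∈ vanishing ℓ σ
    · exact ⟨0, hσ.2.1, fun h => absurd hi h⟩
    · obtain ⟨x, hx, hne⟩ : ∃ x ∈ σ, ℓ i x ≠ 0 := by simpa [vanishing] using hi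
      exact ⟨x, hx, fun _ => ((hσ.1 hx).1 i).lt_of_ne' hne⟩
  choose x hxσ hxpos using this
  cases nonempty_fintype ι
  refine ⟨∑ i, x i, Finset.sum_induction _ (· ∈ σ) (fun a b ha hb => hσ.2.2.1 a ha b hb)
    hσ.2.1 fun i _ => hxσ i, fun i hi => ?_⟩
  rw [map_sum]
  exact (hxpos i hi).trans_le <|
    Finset.single_le_sum (fun j _ => (hσ.1 (hxσ j)).1 i) (Finset.mem_univ i)

theorem openFace_nonempty (S : Set ι) : (openFace ℓ S).Nonempty := by
  obtain ⟨z, hz, hpos⟩ := exists_mem_forall_pos (isConeFace_face (ℓ := ℓ) S)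
  exact ⟨z, fun i hi => hi z hz, hpos⟩

theorem exists_smul_sub_mem_face (hx : x ∈ openFace ℓ S)
    (hy : ∀ i ∈ vanishing ℓ (face ℓ S), ℓ i y = 0) : ∃ t : ℝ, 0 < t ∧ t • x - y ∈ face ℓ S := by
  obtain ⟨N, hN⟩ := exists_nat_forall_le_mul hx.2 fun i => ℓ i y
  have key : ∀ i, 0 ≤ ℓ i (((N : ℝ) + 1) • x - y) ∧
      (i ∈ vanishing ℓ (face ℓ S) → ℓ i (((N : ℝ) + 1) • x - y) = 0) := fun i => by
    by_cases hi : i ∈ vanishing ℓ (face ℓ S)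
    · simp [hx.1 i hi, hy i hi]
    · simp only [map_sub, map_smul, smul_eq_mul, hi, IsEmpty.forall_iff, and_true]
      nlinarith [hN i hi, hx.2 i hi]
  exact ⟨N + 1, by positivity, fun i => (key i).1,
    fun i hi => (key i).2 (subset_vanishing_face hi)⟩

theorem eq_face_vanishing {σ : Set E} (hσ : IsConeFace σ (face ℓ ∅)) :
    σ = face ℓ (vanishing ℓ σ) := by
  refine (Subset.antisymm (fun x hx => ⟨(hσ.1 hx).1, fun i hi => hi x hx⟩) fun x hx => ?_)
  obtain ⟨z, hz, hpos⟩ := exists_mem_forall_pos hσ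
  -- `x ≼ N • z ∈ σ` for large `N`, and `σ` is a face
  obtain ⟨N, hN⟩ := exists_nat_forall_le_mul hpos fun i => ℓ i x
  let σ' : AddSubmonoid E := ⟨⟨σ, fun {a b} ha hb => hσ.2.2.1 a ha b hb⟩, hσ.2.1⟩
  have hNz : N • z ∈ σ := σ'.nsmul_mem hz N
  have hsub : N • z - x ∈ face ℓ ∅ := ⟨fun i => by
    by_cases hi : i ∈ vanishing ℓ σ
    · simp [hi z hz, hx.2 i hi]
    · simpa [← Nat.cast_smul_eq_nsmul ℝ] using hN i hi, by simp⟩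
  exact (hσ.2.2.2 _ hsub x (face_subset_cone hx) (by simpa using hNz)).2

end Faces

section Topology

variable {E ι : Type*} [NormedAddCommGroup E] [NormedSpace ℝ E] [FiniteDimensional ℝ E]
  [Finite ι] {ℓ : ι → E →ₗ[ℝ] ℝ}

theorem intrinsicInterior_face (S : Set ι) : intrinsicInterior ℝ (face ℓ S) = openFace ℓ S := by
  set A := affineSpan ℝ (face ℓ S)
  apply Subset.antisymm
  · rintro _ ⟨x, hx, rfl⟩
    have hxS : x ∈ (↑) ⁻¹' face ℓ S := interior_subset hx
    obtain ⟨z, hz⟩ := openFace_nonempty (ℓ := ℓ) S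
    have hzA : z ∈ A := subset_affineSpan ℝ _ (openFace_subset_face hz)
    have h0A : (0 : E) ∈ A := subset_affineSpan ℝ _ zero_mem_face
    let path : ℝ → A := fun t => ⟨(-t) • (z -ᵥ 0) +ᵥ (x : E),
      A.smul_vsub_vadd_mem (-t) hzA h0A x.2⟩
    have hpath : Continuous path := Continuous.subtype_mk (by fun_prop) _
    have hpath0 : path 0 = x := by ext; simp [path]
    obtain ⟨t, hmem, ht⟩ := (((hpath.tendsto 0).eventually (isOpen_interior.mem_nhds
      (hpath0 ▸ hx))).filter_mono nhdsWithin_le_nhds |>.and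
        (self_mem_nhdsWithin (s := Ioi (0 : ℝ)))).exists
    have hxt : (x : E) - t • z ∈ face ℓ S := by
      simpa [path, sub_eq_neg_add] using interior_subset hmem
    refine ⟨fun i hi => hi _ hxS, fun i hi => ?_⟩
    have := hxt.1 i
    simp only [map_sub, map_smul, smul_eq_mul] at this
    nlinarith [hz.2 i hi, show 0 < t from ht]
  · intro x hx
    let U : Set A := ⋂ i ∈ (vanishing ℓ (face ℓ S))ᶜ, {y : A | 0 < ℓ i y}
    have hU : IsOpen U := (toFinite _).isOpen_biInter fun i _ => isOpen_Ioi.preimage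
      ((ℓ i).continuous_of_finiteDimensional.comp continuous_subtype_val)
    have hUS : U ⊆ (↑) ⁻¹' face ℓ S := fun y hy => by
      refine ⟨fun i => ?_, fun i hi => map_eq_zero_of_mem_affineSpan (subset_vanishing_face hi) y.2⟩
      by_cases hi : i ∈ vanishing ℓ (face ℓ S)
      · exact (map_eq_zero_of_mem_affineSpan hi y.2).ge
      · exact (mem_iInter₂.mp hy i hi).le
    exact ⟨⟨x, subset_affineSpan ℝ _ (openFace_subset_face hx)⟩,
      interior_maximal hUS hU (mem_iInter₂.mpr fun i hi => hx.2 i hi), rfl⟩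

theorem isOpen_openFace_empty (hspan : face ℓ ∅ - face ℓ ∅ = univ) :
    IsOpen (openFace ℓ (∅ : Set ι)) := by
  have hzero : ∀ i ∈ vanishing ℓ (face ℓ ∅), ∀ x : E, ℓ i x = 0 := fun i hi x => by
    obtain ⟨p, hp, q, hq, rfl⟩ : x ∈ face ℓ ∅ - face ℓ ∅ := hspan ▸ mem_univ x
    simp [hi p hp, hi q hq]
  have : openFace ℓ (∅ : Set ι) = ⋂ i ∈ (vanishing ℓ (face ℓ ∅))ᶜ, ℓ i ⁻¹' Ioi 0 := by
    ext x
    simp only [openFace, mem_ofPred_eq, mem_iInter₂, mem_compl_iff, mem_preimage, mem_Ioi]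
    exact and_iff_right fun i hi => hzero i hi x
  rw [this]
  exact (toFinite _).isOpen_biInter fun i _ =>
    isOpen_Ioi.preimage (ℓ i).continuous_of_finiteDimensional

end Topology

end PolyhedralCone

theorem IsOpen.isClosed_setOf_forall_sub_mem {G : Type*} [TopologicalSpace G] [AddCommGroup G]
    [IsTopologicalAddGroup G] {U : Set G} (hU : IsOpen U) (D : Set G) :
    IsClosed {x | ∀ s ∈ U, x - s ∈ D} := by
  have : {x | ∀ s ∈ U, x - s ∈ D}ᶜ = Dᶜ + U := by
    ext x
    simp only [mem_compl_iff, mem_ofPred_eq, not_forall, Set.mem_add, exists_prop]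
    exact ⟨fun ⟨s, hs, hxs⟩ => ⟨x - s, hxs, s, hs, sub_add_cancel x s⟩,
      fun ⟨d, hd, s, hs, hds⟩ => ⟨s, hs, by rwa [← hds, add_sub_cancel_right]⟩⟩
  rw [← isOpen_compl_iff, this]
  exact hU.add_left

theorem exists_add_mem_forall_add_mem {G J : Type*} [AddCommGroup G] [Finite J] (V : J → Set G)
    {τ : Set G} (hτ₀ : 0 ∈ τ) (hτ : ∀ s ∈ τ, ∀ t ∈ τ, s + t ∈ τ)
    (hV : ∀ j, ∀ y ∈ V j, ∀ t ∈ τ, y - t ∈ V j) (x : G) :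
    ∃ a, a - x ∈ τ ∧ ∀ j, a ∈ V j → ∀ t ∈ τ, a + t ∈ V j := by
  let exits (y : G) : Set J := {j | y ∈ V j ∧ ∃ t ∈ τ, y + t ∉ V j}
  obtain ⟨a, hax, hmin⟩ := Finite.exists_minimalFor' exits {a | a - x ∈ τ} (toFinite _)
    ⟨x, by simpa using hτ₀⟩
  refine ⟨a, hax, fun j haj t ht => by_contra fun hat => ?_⟩
  have hsub : exits (a + t) ⊆ exits a := fun k ⟨hk, s, hs, hks⟩ =>
    ⟨by simpa using hV k _ hk t ht, t + s, hτ t ht s hs, by rwa [← add_assoc]⟩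
  have hj : j ∉ exits (a + t) := fun hj => hat hj.1
  exact hj (hmin (show a + t - x ∈ τ by simpa [add_sub_right_comm] using hτ _ hax t ht) hsub
    ⟨haj, t, ht, hat⟩)

section Downset

variable {n : ℕ} {C D σ : Set (Fin n → ℝ)} {x y c : Fin n → ℝ}

theorem IsDownset.sub_mem (hD : IsDownset C D) (hy : y ∈ D) (hc : c ∈ C) : y - c ∈ D :=
  hD _ y hy (by simpa using hc)

theorem IsDownset.sub_mem_upSet (hD : IsDownset C D) (hx : x ∈ upSet D σ) (hc : c ∈ C) :
    x - c ∈ upSet D σ := fun s hs => by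
  simpa [sub_right_comm] using hD.sub_mem (hx s hs) hc

theorem IsDownset.mem_upSet (hD : IsDownset C D) (hσ : σ ⊆ C) (hy : y ∈ D) : y ∈ upSet D σ :=
  fun _ hs => hD.sub_mem hy (hσ (intrinsicInterior_subset hs))

end Downset

namespace PolyhedralCone

variable {n : ℕ} {ι : Type*} [Finite ι] {ℓ : ι → (Fin n → ℝ) →ₗ[ℝ] ℝ} {D : Set (Fin n → ℝ)}
  {S T : Set ι} {a c : Fin n → ℝ}

theorem mem_upSet_face : a ∈ upSet D (face ℓ S) ↔ ∀ s ∈ openFace ℓ S, a - s ∈ D := by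
  rw [upSet, intrinsicInterior_face, mem_ofPred_eq]

theorem upSet_face_mono (hD : IsDownset (face ℓ ∅) D) (h : face ℓ S ⊆ face ℓ T) :
    upSet D (face ℓ S) ⊆ upSet D (face ℓ T) := by
  intro x hx
  rw [mem_upSet_face] at hx ⊢
  intro s hs
  obtain ⟨u, hu⟩ := openFace_nonempty (ℓ := ℓ) S
  obtain ⟨t, ht, hts⟩ := exists_smul_sub_mem_face hs fun i hi => hi u (h (openFace_subset_face hu))
  -- `s = t⁻¹ • u + t⁻¹ • (t • s - u)` with the first summand in `S°` and the second in the cone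
  have hsub : s - t⁻¹ • u ∈ face ℓ ∅ := by
    simpa [smul_sub, ht.ne'] using face_subset_cone (smul_mem_face (inv_nonneg.2 ht.le) hts)
  simpa using hD.sub_mem (hx _ (smul_mem_openFace (inv_pos.2 ht) hu)) hsub

theorem isClosed_upSet_cone (hspan : face ℓ ∅ - face ℓ ∅ = univ) :
    IsClosed (upSet D (face ℓ (∅ : Set ι))) := by
  simpa only [upSet, intrinsicInterior_face] using
    (isOpen_openFace_empty hspan).isClosed_setOf_forall_sub_mem D

variable (ℓ D) in
def ascentFaces (a : Fin n → ℝ) : Set (Set ι) :=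
  {S | ∃ c ∈ openFace ℓ S, a + c ∈ upSet D (face ℓ ∅)}

theorem exists_ascentFaces_ssubset (hD : IsDownset (face ℓ ∅) D)
    (hspan : face ℓ ∅ - face ℓ ∅ = univ) (ha : a ∈ upSet D (face ℓ ∅))
    (hc : c ∈ openFace ℓ S) (hac : a + c ∈ upSet D (face ℓ ∅))
    (hstop : ¬ ∀ t : ℝ, 0 ≤ t → a + t • c ∈ upSet D (face ℓ ∅)) :
    ∃ a₁, a₁ - a ∈ face ℓ ∅ ∧ a₁ ∈ upSet D (face ℓ ∅) ∧
      ascentFaces ℓ D a₁ ⊂ ascentFaces ℓ D a := by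
  have hcC : c ∈ face ℓ ∅ := face_subset_cone (openFace_subset_face hc)
  set J := {t : ℝ | 0 ≤ t ∧ a + t • c ∈ upSet D (face ℓ ∅)}
  obtain ⟨t₀, -, hat₀⟩ : ∃ t₀ : ℝ, 0 ≤ t₀ ∧ a + t₀ • c ∉ upSet D (face ℓ ∅) := by
    simpa using hstop
  have hJbdd : BddAbove J := ⟨t₀, fun t ⟨_, ht⟩ => le_of_not_gt fun hlt => hat₀ <| by
    convert hD.sub_mem_upSet ht (smul_mem_face (sub_nonneg.2 hlt.le) hcC) using 1
    module⟩
  have hJclosed : IsClosed J :=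
    isClosed_Ici.inter ((isClosed_upSet_cone hspan).preimage (by fun_prop))
  obtain ⟨hh, ha₁⟩ : sSup J ∈ J := hJclosed.csSup_mem ⟨0, le_rfl, by simpa using ha⟩ hJbdd
  refine ⟨a + sSup J • c, by simpa using smul_mem_face hh hcC, ha₁,
    (ssubset_iff_of_subset ?_).2 ⟨S, ⟨c, hc, hac⟩, ?_⟩⟩
  · rintro T ⟨c', hc', hac'⟩
    exact ⟨c', hc', by simpa [add_right_comm] using hD.sub_mem_upSet hac' (smul_mem_face hh hcC)⟩
  · rintro ⟨c', hc', hac'⟩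
    obtain ⟨t, ht, htc⟩ := exists_smul_sub_mem_face hc' fun i hi => hi c (openFace_subset_face hc)
    -- `a + (sSup J + t⁻¹) • c = (a + sSup J • c + c') - (c' - t⁻¹ • c)`
    have hmem : sSup J + t⁻¹ ∈ J := ⟨by positivity, by
      convert hD.sub_mem_upSet hac' (face_subset_cone (smul_mem_face (inv_nonneg.2 ht.le) htc))
        using 1
      rw [smul_sub, smul_smul, inv_mul_cancel₀ ht.ne', one_smul]
      module⟩
    linarith [le_csSup hJbdd hmem, inv_pos.2 ht]

theorem add_mem_upSet_iff_mem_face (hD : IsDownset (face ℓ ∅) D)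
    (hS : MaximalFor (· ∈ ascentFaces ℓ D a) (face ℓ) S) (hc : c ∈ openFace ℓ S)
    (hray : ∀ t : ℝ, 0 ≤ t → a + t • c ∈ upSet D (face ℓ ∅)) {c₀ : Fin n → ℝ}
    (hc₀ : c₀ ∈ face ℓ ∅) : a + c + c₀ ∈ upSet D (face ℓ ∅) ↔ c₀ ∈ face ℓ S := by
  have hcC : c ∈ face ℓ ∅ := face_subset_cone (openFace_subset_face hc)
  constructor
  · intro hmem
    -- `Z` is an ascent face containing `c`, so by maximality of `S` it lies inside `face ℓ S`
    set Z := {i | ℓ i (c + c₀) = 0}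
    have hZ : c + c₀ ∈ openFace ℓ Z := mem_openFace_setOf_eq_zero (add_mem_face hcC hc₀)
    obtain ⟨hcZ, hc₀Z⟩ := (isConeFace_face Z).2.2.2 c hcC c₀ hc₀ (openFace_subset_face hZ)
    exact hS.2 ⟨_, hZ, by rwa [← add_assoc]⟩ (face_subset_of_mem_openFace hc hcZ) hc₀Z
  · intro hc₀S
    obtain ⟨t, ht, htc⟩ := exists_smul_sub_mem_face hc fun i hi => hi c₀ hc₀S
    convert hD.sub_mem_upSet (hray (1 + t) (by positivity)) (face_subset_cone htc) using 1
    module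

theorem exists_add_mem_upSet_iff (hD : IsDownset (face ℓ ∅) D)
    (hspan : face ℓ ∅ - face ℓ ∅ = univ) {b : Fin n → ℝ} (hb : b ∈ upSet D (face ℓ ∅)) :
    ∃ a S, a - b ∈ face ℓ ∅ ∧
      ∀ c ∈ face ℓ ∅, a + c ∈ upSet D (face ℓ ∅) ↔ c ∈ face ℓ S := by
  obtain ⟨a, ⟨hab, ha⟩, hmin⟩ := Finite.exists_minimalFor' (ascentFaces ℓ D)
    {a | a - b ∈ face ℓ ∅ ∧ a ∈ upSet D (face ℓ ∅)} (toFinite _)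
    ⟨b, by simpa using zero_mem_face, hb⟩
  obtain ⟨S, hS⟩ := Finite.exists_maximalFor' (face ℓ) (ascentFaces ℓ D a)
    ((finite_range (face ℓ)).subset (image_subset_range _ _))
    ⟨_, 0, mem_openFace_setOf_eq_zero zero_mem_face, by simpa using ha⟩
  obtain ⟨c, hc, hac⟩ := hS.1
  have hray : ∀ t : ℝ, 0 ≤ t → a + t • c ∈ upSet D (face ℓ ∅) := by
    by_contra hstop
    obtain ⟨a₁, ha₁a, ha₁, hlt⟩ := exists_ascentFaces_ssubset hD hspan ha hc hac hstop
    exact hlt.not_subset <| hmin ⟨by simpa using add_mem_face ha₁a hab, ha₁⟩ hlt.subset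
  refine ⟨a + c, S, ?_, fun c₀ hc₀ => add_mem_upSet_iff_mem_face hD hS hc hray hc₀⟩
  simpa [add_sub_right_comm] using
    add_mem_face hab (face_subset_cone (openFace_subset_face hc))

theorem isCogen_face (hD : IsDownset (face ℓ ∅) D) {a₁ : Fin n → ℝ}
    (hrise : ∀ c ∈ face ℓ ∅, a₁ + c ∈ upSet D (face ℓ ∅) ↔ c ∈ face ℓ S)
    (ha : a - a₁ ∈ face ℓ S)
    (hstay : ∀ T, a ∈ upSet D (face ℓ T) → ∀ t ∈ face ℓ S, a + t ∈ upSet D (face ℓ T))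
    (hT : MinimalFor (fun T => face ℓ S ⊆ face ℓ T ∧ a ∈ upSet D (face ℓ T)) (face ℓ) T) :
    IsCogen (face ℓ ∅) D (face ℓ S) (face ℓ T) a := by
  refine ⟨?_, fun σ hσ hSσ hσT haσ => ?_⟩
  · simp only [singleton_add]
    ext x
    constructor
    · rintro ⟨⟨c, hc, rfl⟩, hx⟩
      have hsum : a - a₁ + c ∈ face ℓ S := (hrise _ (add_mem_face (face_subset_cone ha) hc)).1 <| by
        simpa [← add_assoc] using upSet_face_mono hD face_subset_cone hx
      exact ⟨c, ((isConeFace_face S).2.2.2 _ (face_subset_cone ha) c hc hsum).2, rfl⟩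
    · rintro ⟨c, hc, rfl⟩
      exact ⟨⟨c, face_subset_cone hc, rfl⟩, hstay T hT.1.2 c hc⟩
  · rw [eq_face_vanishing hσ] at hSσ hσT haσ
    exact hσT.not_subset (hT.2 ⟨hSσ, haσ⟩ hσT.subset)

end PolyhedralCone

open PolyhedralCone

theorem exists_cogenerator_above_general {n : ℕ} (C D : Set (Fin n → ℝ))
    (hC : IsPolyCone C) (hspan : C - C = Set.univ)
    (hD : IsDownset C D) (b : Fin n → ℝ) (hb : b ∈ D) :
    ∃ (τ σ : Set (Fin n → ℝ)) (a : Fin n → ℝ), IsConeFace τ C ∧ IsConeFace σ C ∧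
      τ ⊆ σ ∧ a - b ∈ C ∧ IsCogen C D τ σ a := by
  obtain ⟨m, ℓ, hCℓ⟩ := hC
  rw [← face_empty] at hCℓ
  subst hCℓ
  obtain ⟨a₁, S, ha₁b, hrise⟩ :=
    exists_add_mem_upSet_iff hD hspan (hD.mem_upSet subset_rfl hb)
  obtain ⟨a, haa₁, hstay⟩ := exists_add_mem_forall_add_mem (fun T => upSet D (face ℓ T))
    zero_mem_face (fun _ hs _ ht => add_mem_face hs ht)
    (fun _ _ hy t ht => hD.sub_mem_upSet hy (face_subset_cone ht)) a₁
  have ha : a ∈ upSet D (face ℓ ∅) := by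
    simpa using (hrise _ (face_subset_cone haa₁)).2 haa₁
  obtain ⟨T, hT⟩ := Finite.exists_minimalFor' (face ℓ)
    {T | face ℓ S ⊆ face ℓ T ∧ a ∈ upSet D (face ℓ T)}
    ((finite_range (face ℓ)).subset (image_subset_range _ _)) ⟨∅, face_subset_cone, ha⟩
  refine ⟨face ℓ S, face ℓ T, a, isConeFace_face S, isConeFace_face T, hT.1.1, ?_,
    isCogen_face hD hrise haa₁ hstay hT⟩
  simpa using add_mem_face (face_subset_cone haa₁) ha₁b

/-- Every element of a downset precedes a cogenerator along some face `τ`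
with some nadir `σ ⊇ τ`. -/
theorem exists_cogenerator_above {n : ℕ} (C D : Set (Fin n → ℝ))
    (hC : IsPolyCone C) (hpointed : C ∩ (-C) = {0}) (hspan : C - C = Set.univ)
    (hD : IsDownset C D) (b : Fin n → ℝ) (hb : b ∈ D) :
    ∃ (τ σ : Set (Fin n → ℝ)) (a : Fin n → ℝ), IsConeFace τ C ∧ IsConeFace σ C ∧
      τ ⊆ σ ∧ a - b ∈ C ∧ IsCogen C D τ σ a :=
  exists_cogenerator_above_general C D hC hspan hD b hb
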